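/- The generalized spectral radius of the lifted family equals the 'periodic' constrained generalized spectral radius: ρ̄(𝒜_ℳ) = ρ̄^{per}(𝒜,ℳ). -/

import Mathlib

/-!
Every word product `F_σ` lies in the finite monoid of `0/1` matrices with at most one nonzero
entry per column, so its powers are eventually periodic; hence each eigenvalue of `F_σ` is `0` or
of modulus `1`, and `ρ(F_σ) ∈ {0, 1}`. Gelfand's formula for the Frobenius norm, which is
multiplicative on Kronecker products, gives `ρ(F ⊗ A) = ρ(F) ρ(A)`. Thus `ρ(Φ_σ) = ρ(A_σ)` for
periodic words and `ρ(Φ_σ) = 0` otherwise, and the suprema defining both radii agree for every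
word length.
-/

open Matrix Filter Kronecker

noncomputable section

/-- The product `A_{σ_{k-1}} ⋯ A_{σ_0}` for a word `σ = σ_0 … σ_{k-1}`. -/
def wordProd {m : ℕ} {N : Type*} [Fintype N] [DecidableEq N]
    (A : Fin m → Matrix N N ℝ) {k : ℕ} (σ : Fin k → Fin m) : Matrix N N ℝ :=
  ((List.ofFn fun i => A (σ i)).reverse).prod

/-- The spectral radius: maximal modulus of a complex eigenvalue. -/
def specRad {N : Type*} [Fintype N] [DecidableEq N] (A : Matrix N N ℝ) : ℝ :=
  ⨆ μ ∈ ((A.map (Complex.ofReal ·)).charpoly.roots).toFinset, ‖μ‖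

/-- `ν` is a sub-multiplicative matrix norm. -/
def IsSubmultNorm {N : Type*} [Fintype N] [DecidableEq N]
    (ν : Matrix N N ℝ → ℝ) : Prop :=
  (∀ S, 0 ≤ ν S) ∧ (∀ S, ν S = 0 ↔ S = 0) ∧
  (∀ (c : ℝ) (S), ν (c • S) = |c| * ν S) ∧
  (∀ S T, ν (S + T) ≤ ν S + ν T) ∧
  (∀ S T, ν (S * T) ≤ ν S * ν T)

/-- Joint spectral radius. -/
def JSR {m : ℕ} {N : Type*} [Fintype N] [DecidableEq N]
    (ν : Matrix N N ℝ → ℝ) (A : Fin m → Matrix N N ℝ) : ℝ :=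
  Filter.limsup
    (fun k : ℕ => (⨆ σ : Fin k → Fin m, ν (wordProd A σ)) ^ ((k : ℝ)⁻¹)) Filter.atTop

/-- Generalized spectral radius. -/
def GSR {m : ℕ} {N : Type*} [Fintype N] [DecidableEq N]
    (A : Fin m → Matrix N N ℝ) : ℝ :=
  Filter.limsup
    (fun k : ℕ => (⨆ σ : Fin k → Fin m, specRad (wordProd A σ)) ^ ((k : ℝ)⁻¹)) Filter.atTop

/-- Constrained joint spectral radius. -/
def CJSR {n m ℓ : ℕ} (ν : Matrix (Fin n) (Fin n) ℝ → ℝ)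
    (A : Fin m → Matrix (Fin n) (Fin n) ℝ)
    (F : Fin m → Matrix (Fin ℓ) (Fin ℓ) ℝ) : ℝ :=
  Filter.limsup
    (fun k : ℕ =>
      (⨆ σ : {σ : Fin k → Fin m // wordProd F σ ≠ 0}, ν (wordProd A σ.1)) ^ ((k : ℝ)⁻¹))
    Filter.atTop

/-- Constrained generalized spectral radius. -/
def CGSR {n m ℓ : ℕ}
    (A : Fin m → Matrix (Fin n) (Fin n) ℝ)
    (F : Fin m → Matrix (Fin ℓ) (Fin ℓ) ℝ) : ℝ :=
  Filter.limsup
    (fun k : ℕ =>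
      (⨆ σ : {σ : Fin k → Fin m // wordProd F σ ≠ 0}, specRad (wordProd A σ.1)) ^ ((k : ℝ)⁻¹))
    Filter.atTop

/-- The block norm `⦀S⦀ = max_j Σ_i ‖S_{ij}‖`. -/
def blockNorm {n ℓ : ℕ} (ν : Matrix (Fin n) (Fin n) ℝ → ℝ)
    (S : Matrix (Fin ℓ × Fin n) (Fin ℓ × Fin n) ℝ) : ℝ :=
  ⨆ j : Fin ℓ, ∑ i : Fin ℓ, ν (Matrix.of fun a b => S (i, a) (j, b))

open scoped NNReal ENNReal

theorem NNReal.eq_zero_or_eq_one_of_pow_eq_pow {x : ℝ≥0} {i j : ℕ} (hij : i ≠ j)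
    (h : x ^ i = x ^ j) : x = 0 ∨ x = 1 := by
  by_contra! hx
  exact hij ((pow_right_inj₀ (pos_iff_ne_zero.2 hx.1) hx.2).1 h)

namespace spectrum

theorem pow_eq_pow_of_mem {𝕜 A : Type*} [Field 𝕜] [Ring A] [Algebra 𝕜 A] {a : A} {i j : ℕ}
    (h : a ^ i = a ^ j) {μ : 𝕜} (hμ : μ ∈ spectrum 𝕜 a) : μ ^ i = μ ^ j := by
  obtain _ | _ := subsingleton_or_nontrivial A
  · simp [spectrum.of_subsingleton] at hμ
  have hmem := subset_polynomial_aeval a (Polynomial.X ^ i - Polynomial.X ^ j) ⟨μ, hμ, rfl⟩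
  simpa [h, sub_eq_zero] using hmem

theorem spectralRadius_lt_top {𝕜 A : Type*} [NontriviallyNormedField 𝕜] [NormedRing A]
    [NormedAlgebra 𝕜 A] [CompleteSpace A] (a : A) : spectralRadius 𝕜 a < ⊤ :=
  (spectralRadius_le_pow_nnnorm_pow_one_div 𝕜 a 0).trans_lt (by simp [ENNReal.mul_lt_top])

theorem spectralRadius_eq_zero_or_eq_one_of_pow_eq_pow {𝕜 A : Type*} [NormedField 𝕜] [Ring A]
    [Algebra 𝕜 A] {a : A} {i j : ℕ} (hij : i ≠ j) (h : a ^ i = a ^ j) :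
    spectralRadius 𝕜 a = 0 ∨ spectralRadius 𝕜 a = 1 := by
  have hnorm : ∀ μ ∈ spectrum 𝕜 a, ‖μ‖₊ = 0 ∨ ‖μ‖₊ = 1 := fun μ hμ =>
    NNReal.eq_zero_or_eq_one_of_pow_eq_pow hij
      (by rw [← nnnorm_pow, ← nnnorm_pow, pow_eq_pow_of_mem h hμ])
  have hle : spectralRadius 𝕜 a ≤ 1 :=
    iSup₂_le fun μ hμ => by rcases hnorm μ hμ with h | h <;> simp [h]
  by_cases hone : ∃ μ ∈ spectrum 𝕜 a, ‖μ‖₊ = 1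
  · obtain ⟨μ, hμ, h1⟩ := hone
    exact .inr (hle.antisymm (le_iSup₂_of_le μ hμ (by simp [h1])))
  · push Not at hone
    exact .inl (nonpos_iff_eq_zero.1
      (iSup₂_le fun μ hμ => by simp [(hnorm μ hμ).resolve_right (hone μ hμ)]))

end spectrum

namespace Matrix

variable {L N : Type*} [Fintype L] [Fintype N]

section Frobenius

open scoped Matrix.Norms.Frobenius

theorem frobenius_nnnorm_kronecker {α : Type*} [SeminormedRing α] [NormMulClass α]
    (F : Matrix L L α) (A : Matrix N N α) : ‖F ⊗ₖ A‖₊ = ‖F‖₊ * ‖A‖₊ := by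
  simp_rw [frobenius_nnnorm_def, ← NNReal.mul_rpow, Finset.sum_mul_sum, Fintype.sum_prod_type,
    kronecker_apply, nnnorm_mul, NNReal.mul_rpow]

variable [DecidableEq L] [DecidableEq N]

theorem kronecker_pow {R : Type*} [CommSemiring R] (F : Matrix L L R) (A : Matrix N N R)
    (k : ℕ) : (F ⊗ₖ A) ^ k = (F ^ k) ⊗ₖ (A ^ k) := by
  induction k with
  | zero => simp
  | succ k ih => rw [pow_succ, pow_succ, pow_succ, ih, mul_kronecker_mul]

theorem _root_.List.prod_map_kronecker {ι R : Type*} [CommSemiring R] (l : List ι)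
    (F : ι → Matrix L L R) (A : ι → Matrix N N R) :
    (l.map fun i => F i ⊗ₖ A i).prod = (l.map F).prod ⊗ₖ (l.map A).prod := by
  induction l with
  | nil => simp
  | cons i l ih => simp [ih, mul_kronecker_mul]

theorem spectralRadius_kronecker (F : Matrix L L ℂ) (A : Matrix N N ℂ) :
    spectralRadius ℂ (F ⊗ₖ A) = spectralRadius ℂ F * spectralRadius ℂ A := by
  have hF := spectrum.pow_nnnorm_pow_one_div_tendsto_nhds_spectralRadius F
  have hA := spectrum.pow_nnnorm_pow_one_div_tendsto_nhds_spectralRadius A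
  refine tendsto_nhds_unique
    (spectrum.pow_nnnorm_pow_one_div_tendsto_nhds_spectralRadius (F ⊗ₖ A)) ?_
  convert ENNReal.Tendsto.mul hF (.inr (spectrum.spectralRadius_lt_top A).ne) hA
    (.inr (spectrum.spectralRadius_lt_top F).ne) using 2 with k
  rw [kronecker_pow, frobenius_nnnorm_kronecker, ENNReal.coe_mul,
    ENNReal.mul_rpow_of_nonneg _ _ (by positivity)]

end Frobenius

theorem mul_col_eq_zero_or_exists_eq_col {R : Type*} [Semiring R] {M P : Matrix L L R} {t : L}
    (h01 : ∀ r, P r t = 0 ∨ P r t = 1) (hcol : ∀ r r', P r t ≠ 0 → P r' t ≠ 0 → r = r') :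
    (∀ s, (M * P) s t = 0) ∨ ∃ r, ∀ s, (M * P) s t = M s r := by
  by_cases h : ∃ r, P r t ≠ 0
  · obtain ⟨r, hr⟩ := h
    refine .inr ⟨r, fun s => ?_⟩
    rw [mul_apply, Finset.sum_eq_single r (fun r' _ hr' => ?_) (by simp),
      (h01 r).resolve_left hr, mul_one]
    rw [not_ne_iff.1 (mt (hcol r' r · hr) hr'), mul_zero]
  · push Not at h
    exact .inl fun s => by simp [mul_apply, h]

variable (L) (R : Type*) [DecidableEq L] [Semiring R]

/-- The matrices of partial self-maps of `L`, acting on basis vectors. -/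
def partialMapSubmonoid : Submonoid (Matrix L L R) where
  carrier := {M | (∀ s t, M s t = 0 ∨ M s t = 1) ∧ ∀ t s s', M s t ≠ 0 → M s' t ≠ 0 → s = s'}
  one_mem' := ⟨fun s t => by by_cases h : s = t <;> simp [one_apply, h],
    fun t s s' hs hs' => by simp_all [one_apply]⟩
  mul_mem' := by
    rintro M P ⟨hM01, hMcol⟩ ⟨hP01, hPcol⟩
    have hcols t := mul_col_eq_zero_or_exists_eq_col (M := M) (hP01 · t) (hPcol t)
    refine ⟨fun s t => ?_, fun t s s' hs hs' => ?_⟩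
    · rcases hcols t with h | ⟨r, h⟩
      · simp [h]
      · rw [h]; exact hM01 s r
    · rcases hcols t with h | ⟨r, h⟩
      · exact absurd (h s) hs
      · rw [h] at hs hs'
        exact hMcol r s s' hs hs'

instance : Finite (partialMapSubmonoid L R) := by
  refine Set.Finite.to_subtype (Set.Finite.subset
    (Set.Finite.pi fun _ => Set.Finite.pi fun _ => Set.toFinite ({0, 1} : Set R)) ?_)
  intro M hM
  simpa [Set.mem_pi] using hM.1

end Matrix

theorem Submonoid.exists_ne_pow_eq_pow {M : Type*} [Monoid M] {S : Submonoid M} [Finite S]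
    {x : M} (hx : x ∈ S) : ∃ i j : ℕ, i ≠ j ∧ x ^ i = x ^ j := by
  obtain ⟨i, j, hij, h⟩ := Finite.exists_ne_map_eq_of_infinite fun k : ℕ => (⟨x, hx⟩ : S) ^ k
  exact ⟨i, j, hij, by simpa using congrArg Subtype.val h⟩

theorem Matrix.map_kronecker_ofReal {L N : Type*} (F : Matrix L L ℝ) (A : Matrix N N ℝ) :
    (F ⊗ₖ A).map Complex.ofReal = F.map Complex.ofReal ⊗ₖ A.map Complex.ofReal := by
  ext; simp

section specRad

variable {L N : Type*} [Fintype L] [Fintype N] [DecidableEq L] [DecidableEq N]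

theorem specRad_eq_toReal_spectralRadius (A : Matrix N N ℝ) :
    specRad A = (spectralRadius ℂ (A.map Complex.ofReal)).toReal := by
  have hne : ∀ μ : ℂ, ⨆ (_ : μ ∈ spectrum ℂ (A.map Complex.ofReal)), (‖μ‖₊ : ℝ≥0∞) ≠ ⊤ :=
    fun μ => ne_top_of_le_ne_top ENNReal.coe_ne_top (iSup_le fun _ => le_rfl)
  rw [spectralRadius, ENNReal.toReal_iSup hne, specRad]
  congr! with μ
  rw [ENNReal.toReal_iSup (fun _ => ENNReal.coe_ne_top)]
  simp [Matrix.mem_spectrum_iff_isRoot_charpoly, (Matrix.charpoly_monic _).ne_zero]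

theorem specRad_nonneg (A : Matrix N N ℝ) : 0 ≤ specRad A := by
  rw [specRad_eq_toReal_spectralRadius]
  exact ENNReal.toReal_nonneg

theorem specRad_kronecker (F : Matrix L L ℝ) (A : Matrix N N ℝ) :
    specRad (F ⊗ₖ A) = specRad F * specRad A := by
  simp only [specRad_eq_toReal_spectralRadius, Matrix.map_kronecker_ofReal,
    Matrix.spectralRadius_kronecker, ENNReal.toReal_mul]

theorem specRad_eq_zero_or_eq_one_of_pow_eq_pow {F : Matrix N N ℝ} {i j : ℕ} (hij : i ≠ j)
    (h : F ^ i = F ^ j) : specRad F = 0 ∨ specRad F = 1 := by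
  have hmap (k : ℕ) : (F ^ k).map Complex.ofReal = F.map Complex.ofReal ^ k :=
    Matrix.map_pow F Complex.ofRealHom k
  have hC : F.map Complex.ofReal ^ i = F.map Complex.ofReal ^ j := by rw [← hmap, ← hmap, h]
  rcases spectrum.spectralRadius_eq_zero_or_eq_one_of_pow_eq_pow (𝕜 := ℂ) hij hC with h | h <;>
    simp [specRad_eq_toReal_spectralRadius, h]

end specRad

section wordProd

variable {m : ℕ} {L N : Type*} [Fintype L] [Fintype N] [DecidableEq L] [DecidableEq N]

theorem wordProd_eq_prod_map (A : Fin m → Matrix N N ℝ) {k : ℕ} (σ : Fin k → Fin m) :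
    wordProd A σ = ((List.ofFn σ).reverse.map A).prod := by
  rw [wordProd, List.map_reverse, List.map_ofFn]
  rfl

theorem wordProd_mem {S : Submonoid (Matrix N N ℝ)} {A : Fin m → Matrix N N ℝ}
    (hA : ∀ i, A i ∈ S) {k : ℕ} (σ : Fin k → Fin m) : wordProd A σ ∈ S :=
  S.list_prod_mem (by simp [hA])

theorem wordProd_kronecker (F : Fin m → Matrix L L ℝ) (A : Fin m → Matrix N N ℝ) {k : ℕ}
    (σ : Fin k → Fin m) :
    wordProd (fun i => F i ⊗ₖ A i) σ = wordProd F σ ⊗ₖ wordProd A σ := by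
  simp only [wordProd_eq_prod_map, List.prod_map_kronecker]

theorem specRad_wordProd_eq_zero_or_eq_one {F : Fin m → Matrix L L ℝ}
    (hF : ∀ i, F i ∈ Matrix.partialMapSubmonoid L ℝ) {k : ℕ} (σ : Fin k → Fin m) :
    specRad (wordProd F σ) = 0 ∨ specRad (wordProd F σ) = 1 := by
  obtain ⟨i, j, hij, h⟩ := Submonoid.exists_ne_pow_eq_pow (wordProd_mem hF σ)
  exact specRad_eq_zero_or_eq_one_of_pow_eq_pow hij h

end wordProd

theorem Real.iSup_mul_eq_iSup_subtype {ι : Type*} [Finite ι] {f g : ι → ℝ}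
    (hf : ∀ i, f i = 0 ∨ f i = 1) (hg : ∀ i, 0 ≤ g i) :
    ⨆ i, f i * g i = ⨆ i : {i // f i = 1}, g i := by
  have hsub : 0 ≤ ⨆ i : {i // f i = 1}, g i := Real.iSup_nonneg fun i => hg i
  apply le_antisymm
  · refine Real.iSup_le (fun i => ?_) hsub
    rcases hf i with h | h
    · simpa [h] using hsub
    · simpa [h] using
        le_ciSup (f := fun i : {i // f i = 1} => g i) (Set.finite_range _).bddAbove ⟨i, h⟩
  · refine Real.iSup_le (fun ⟨i, h⟩ => ?_) (Real.iSup_nonneg fun i => ?_)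
    · simpa [h] using le_ciSup (f := fun i => f i * g i) (Set.finite_range _).bddAbove i
    · rcases hf i with h | h <;> simp [h, hg i]

theorem stmt3_general
    {n m ℓ : ℕ}
    (A : Fin m → Matrix (Fin n) (Fin n) ℝ)
    (F : Fin m → Matrix (Fin ℓ) (Fin ℓ) ℝ)
    (hF01 : ∀ i s t, F i s t = 0 ∨ F i s t = 1)
    (hFcol : ∀ i t s s', F i s t ≠ 0 → F i s' t ≠ 0 → s = s') :
    GSR (fun i => F i ⊗ₖ A i) =
      Filter.limsup
        (fun k : ℕ =>
          (⨆ σ : {σ : Fin k → Fin m // specRad (wordProd F σ) = 1},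
            specRad (wordProd A σ.1)) ^ ((k : ℝ)⁻¹))
        Filter.atTop := by
  have hF i : F i ∈ Matrix.partialMapSubmonoid (Fin ℓ) ℝ := ⟨hF01 i, hFcol i⟩
  rw [GSR]
  congr! 3 with k
  simp_rw [wordProd_kronecker, specRad_kronecker]
  exact Real.iSup_mul_eq_iSup_subtype (specRad_wordProd_eq_zero_or_eq_one hF)
    fun σ => specRad_nonneg _

theorem stmt3
    {n m ℓ : ℕ} (hn : 0 < n) (hm : 0 < m) (hℓ : 0 < ℓ)
    (A : Fin m → Matrix (Fin n) (Fin n) ℝ)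
    (F : Fin m → Matrix (Fin ℓ) (Fin ℓ) ℝ)
    (hF01 : ∀ i s t, F i s t = 0 ∨ F i s t = 1)
    (hFcol : ∀ i t s s', F i s t ≠ 0 → F i s' t ≠ 0 → s = s') :
    GSR (fun i => F i ⊗ₖ A i) =
      Filter.limsup
        (fun k : ℕ =>
          (⨆ σ : {σ : Fin k → Fin m // specRad (wordProd F σ) = 1},
            specRad (wordProd A σ.1)) ^ ((k : ℝ)⁻¹))
        Filter.atTop :=
  stmt3_general A F hF01 hFcol

end
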